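/- arXiv:2101.09165 — 3 statements merged into one kernel-verified Lean document; each statement's English description precedes it below -/
import Mathlib

section
/- Let α₁, α₂ ∈ (0,2), let a₁, a₂ be nonzero real numbers, and let f : ℝ → ℝ. Suppose there exist C > 0 and T₀ > 0 such that for all t ≥ T₀, both |f(t) − (a₁/Γ(1−α₁)) t^{−α₁}| ≤ C t^{−min(2α₁, 1+α₁)} and |f(t) − (a₂/Γ(1−α₂)) t^{−α₂}| ≤ C t^{−min(2α₂, 1+α₂)} hold, where 1/Γ(0) is taken to be 0. Then α₁ = α₂. -/
open Filter Real

private lemma key_lemma (K D C₁ C₂ δ₁ δ₂ δ₃ T : ℝ) (hK : 0 < K)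
    (hδ₁ : 0 < δ₁) (hδ₂ : 0 < δ₂) (hδ₃ : 0 < δ₃)
    (h : ∀ t : ℝ, T ≤ t → K ≤ D * t ^ (-δ₁) + C₁ * t ^ (-δ₂) + C₂ * t ^ (-δ₃)) : False := by
  have t1 : Tendsto (fun t : ℝ => D * t ^ (-δ₁)) atTop (nhds 0) := by
    simpa using (tendsto_rpow_neg_atTop hδ₁).const_mul D
  have t2 : Tendsto (fun t : ℝ => C₁ * t ^ (-δ₂)) atTop (nhds 0) := by
    simpa using (tendsto_rpow_neg_atTop hδ₂).const_mul C₁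
  have t3 : Tendsto (fun t : ℝ => C₂ * t ^ (-δ₃)) atTop (nhds 0) := by
    simpa using (tendsto_rpow_neg_atTop hδ₃).const_mul C₂
  have tt : Tendsto (fun t : ℝ => D * t ^ (-δ₁) + C₁ * t ^ (-δ₂) + C₂ * t ^ (-δ₃))
      atTop (nhds 0) := by simpa using (t1.add t2).add t3
  have hev : ∀ᶠ t : ℝ in atTop,
      D * t ^ (-δ₁) + C₁ * t ^ (-δ₂) + C₂ * t ^ (-δ₃) < K :=
    tt.eventually (eventually_lt_nhds hK)
  obtain ⟨t, h1, h2⟩ := (hev.and (eventually_ge_atTop T)).exists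
  exact absurd (h t h2) (not_le.mpr h1)

private lemma gamma_sub_ne_zero {α : ℝ} (h0 : 0 < α) (h2 : α < 2) (h1 : α ≠ 1) :
    Real.Gamma (1 - α) ≠ 0 := by
  apply Real.Gamma_ne_zero
  intro m heq
  have hm0 : (m : ℝ) < 1 := by push_cast at heq ⊢; linarith
  have : m = 0 := by exact_mod_cast Nat.lt_one_iff.mp (by exact_mod_cast hm0)
  subst this
  simp at heq
  exact h1 (by linarith)

private lemma aux (α₁ α₂ a₁ a₂ : ℝ) (f : ℝ → ℝ)
    (hα₁ : α₁ ∈ Set.Ioo (0:ℝ) 2) (hα₂ : α₂ ∈ Set.Ioo (0:ℝ) 2)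
    (ha₁ : a₁ ≠ 0) (ha₂ : a₂ ≠ 0) (C T₀ : ℝ) (hC : 0 < C) (hT₀ : 0 < T₀)
    (h1 : ∀ t : ℝ, T₀ ≤ t →
      |f t - a₁ / Real.Gamma (1 - α₁) * t ^ (-α₁)| ≤ C * t ^ (-(min (2 * α₁) (1 + α₁))))
    (h2 : ∀ t : ℝ, T₀ ≤ t →
      |f t - a₂ / Real.Gamma (1 - α₂) * t ^ (-α₂)| ≤ C * t ^ (-(min (2 * α₂) (1 + α₂)))) :
    ¬ (α₁ < α₂) := by
  intro hlt
  obtain ⟨hα₁0, hα₁2⟩ := hα₁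
  obtain ⟨hα₂0, hα₂2⟩ := hα₂
  set c₁ := a₁ / Real.Gamma (1 - α₁) with hc₁def
  set c₂ := a₂ / Real.Gamma (1 - α₂) with hc₂def
  set β₁ := min (2 * α₁) (1 + α₁) with hβ₁def
  set β₂ := min (2 * α₂) (1 + α₂) with hβ₂def
  have hβ₁gt : α₁ < β₁ := lt_min (by linarith) (by linarith)
  have hβ₂gt : α₂ < β₂ := lt_min (by linarith) (by linarith)
  -- triangle inequality bound
  have tri : ∀ t : ℝ, max T₀ 1 ≤ t →
      |c₁ * t ^ (-α₁) - c₂ * t ^ (-α₂)| ≤ C * t ^ (-β₁) + C * t ^ (-β₂) := by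
    intro t ht
    have hT : T₀ ≤ t := le_trans (le_max_left _ _) ht
    calc |c₁ * t ^ (-α₁) - c₂ * t ^ (-α₂)|
        ≤ |c₁ * t ^ (-α₁) - f t| + |f t - c₂ * t ^ (-α₂)| := abs_sub_le _ _ _
      _ = |f t - c₁ * t ^ (-α₁)| + |f t - c₂ * t ^ (-α₂)| := by rw [abs_sub_comm]
      _ ≤ C * t ^ (-β₁) + C * t ^ (-β₂) := add_le_add (h1 t hT) (h2 t hT)
  by_cases hα₁1 : α₁ = 1
  · -- c₁ = 0, α₂ > 1, c₂ ≠ 0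
    have hc₁0 : c₁ = 0 := by
      rw [hc₁def, hα₁1]; simp [Real.Gamma_zero]
    have hc₂ne : c₂ ≠ 0 := div_ne_zero ha₂ (gamma_sub_ne_zero hα₂0 hα₂2 (by linarith))
    have hβ₁eq : β₁ = 2 := by rw [hβ₁def, hα₁1]; norm_num
    apply key_lemma |c₂| 0 C C 1 (β₁ - α₂) (β₂ - α₂) (max T₀ 1) (abs_pos.mpr hc₂ne)
      one_pos (by rw [hβ₁eq]; linarith) (by linarith)
    intro t ht
    have ht1 : (1:ℝ) ≤ t := le_trans (le_max_right _ _) ht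
    have ht0 : (0:ℝ) < t := lt_of_lt_of_le one_pos ht1
    have base : |c₂| * t ^ (-α₂) ≤ C * t ^ (-β₁) + C * t ^ (-β₂) := by
      have := tri t ht
      rw [hc₁0] at this
      simpa [abs_mul, abs_of_nonneg (Real.rpow_nonneg ht0.le (-α₂))] using this
    have hmul := mul_le_mul_of_nonneg_right base (Real.rpow_pos_of_pos ht0 α₂).le
    have hpow : ∀ x : ℝ, t ^ (-x) * t ^ α₂ = t ^ (-(x - α₂)) := by
      intro x; rw [← Real.rpow_add ht0]; ring_nf
    rw [mul_assoc, hpow α₂] at hmul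
    simp only [sub_self, neg_zero, Real.rpow_zero, mul_one] at hmul
    rw [add_mul, mul_assoc, mul_assoc, hpow β₁, hpow β₂] at hmul
    calc |c₂| ≤ C * t ^ (-(β₁ - α₂)) + C * t ^ (-(β₂ - α₂)) := hmul
      _ ≤ 0 * t ^ (-(1:ℝ)) + C * t ^ (-(β₁ - α₂)) + C * t ^ (-(β₂ - α₂)) := by
          simp
  · -- c₁ ≠ 0
    have hc₁ne : c₁ ≠ 0 := div_ne_zero ha₁ (gamma_sub_ne_zero hα₁0 hα₁2 hα₁1)
    apply key_lemma |c₁| |c₂| C C (α₂ - α₁) (β₁ - α₁) (β₂ - α₁) (max T₀ 1)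
      (abs_pos.mpr hc₁ne) (by linarith) (by linarith) (by linarith)
    intro t ht
    have ht1 : (1:ℝ) ≤ t := le_trans (le_max_right _ _) ht
    have ht0 : (0:ℝ) < t := lt_of_lt_of_le one_pos ht1
    have base : |c₁| * t ^ (-α₁) ≤ |c₂| * t ^ (-α₂) + (C * t ^ (-β₁) + C * t ^ (-β₂)) := by
      have h₂ := tri t ht
      have h₃ : |c₁ * t ^ (-α₁)| ≤ |c₁ * t ^ (-α₁) - c₂ * t ^ (-α₂)| + |c₂ * t ^ (-α₂)| := by
        calc |c₁ * t ^ (-α₁)| = |(c₁ * t ^ (-α₁) - c₂ * t ^ (-α₂)) + c₂ * t ^ (-α₂)| := by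
              ring_nf
          _ ≤ _ := abs_add_le _ _
      rw [abs_mul, abs_mul, abs_of_nonneg (Real.rpow_nonneg ht0.le (-α₁)),
        abs_of_nonneg (Real.rpow_nonneg ht0.le (-α₂))] at h₃
      linarith
    have hmul := mul_le_mul_of_nonneg_right base (Real.rpow_pos_of_pos ht0 α₁).le
    have hpow : ∀ x : ℝ, t ^ (-x) * t ^ α₁ = t ^ (-(x - α₁)) := by
      intro x; rw [← Real.rpow_add ht0]; ring_nf
    rw [mul_assoc, hpow α₁] at hmul
    simp only [sub_self, neg_zero, Real.rpow_zero, mul_one] at hmul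
    rw [add_mul, add_mul, mul_assoc, mul_assoc, mul_assoc, hpow α₂, hpow β₁, hpow β₂] at hmul
    linarith


/-- Asymptotic matching step (t1d): if a function `f` admits the two one-term power
asymptotics `f(t) = (aₖ/Γ(1−αₖ)) t^{−αₖ} + O(t^{−min(2αₖ, 1+αₖ)})` for `k = 1, 2`, with
`a₁, a₂ ≠ 0` and `α₁, α₂ ∈ (0,2)`, then `α₁ = α₂`. (Mathlib's `Real.Gamma` vanishes at
nonpositive integers, encoding the convention `1/Γ(0) = 0`.) -/
theorem order_uniqueness_initial_data (α₁ α₂ a₁ a₂ : ℝ) (f : ℝ → ℝ)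
    (hα₁ : α₁ ∈ Set.Ioo (0:ℝ) 2) (hα₂ : α₂ ∈ Set.Ioo (0:ℝ) 2)
    (ha₁ : a₁ ≠ 0) (ha₂ : a₂ ≠ 0) (C T₀ : ℝ) (hC : 0 < C) (hT₀ : 0 < T₀)
    (h1 : ∀ t : ℝ, T₀ ≤ t →
      |f t - a₁ / Real.Gamma (1 - α₁) * t ^ (-α₁)| ≤ C * t ^ (-(min (2 * α₁) (1 + α₁))))
    (h2 : ∀ t : ℝ, T₀ ≤ t →
      |f t - a₂ / Real.Gamma (1 - α₂) * t ^ (-α₂)| ≤ C * t ^ (-(min (2 * α₂) (1 + α₂)))) :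
    α₁ = α₂ := by
  rcases lt_trichotomy α₁ α₂ with h | h | h
  · exact absurd h (aux α₁ α₂ a₁ a₂ f hα₁ hα₂ ha₁ ha₂ C T₀ hC hT₀ h1 h2)
  · exact h
  · exact absurd h (aux α₂ α₁ a₂ a₁ f hα₂ hα₁ ha₂ ha₁ C T₀ hC hT₀ h2 h1)
end

section
/- Let α₁, α₂ ∈ (0,2), let a₁, a₂ be nonzero real numbers, and let f : ℝ → ℝ. Suppose there exist C > 0 and T₀ > 0 such that for all t ≥ T₀, both |f(t) − (a₁/Γ(−α₁)) t^{−1−α₁}| ≤ C t^{−1−2α₁} and |f(t) − (a₂/Γ(−α₂)) t^{−1−α₂}| ≤ C t^{−1−2α₂} hold, where 1/Γ(−1) is taken to be 0. Then α₁ = α₂. -/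
private lemma aux_vanish (c A B D p q r T : ℝ) (hp : p < 0) (hq : q < 0) (hr : r < 0)
    (h : ∀ t : ℝ, T ≤ t → |c| ≤ A * t ^ p + B * t ^ q + D * t ^ r) : c = 0 := by
  have hlim : Filter.Tendsto (fun t : ℝ => A * t ^ p + B * t ^ q + D * t ^ r)
      Filter.atTop (nhds 0) := by
    have hp' : Filter.Tendsto (fun t : ℝ => t ^ p) Filter.atTop (nhds 0) := by
      have := tendsto_rpow_neg_atTop (y := -p) (by linarith)
      simpa using this
    have hq' : Filter.Tendsto (fun t : ℝ => t ^ q) Filter.atTop (nhds 0) := by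
      have := tendsto_rpow_neg_atTop (y := -q) (by linarith)
      simpa using this
    have hr' : Filter.Tendsto (fun t : ℝ => t ^ r) Filter.atTop (nhds 0) := by
      have := tendsto_rpow_neg_atTop (y := -r) (by linarith)
      simpa using this
    have := ((hp'.const_mul A).add (hq'.const_mul B)).add (hr'.const_mul D)
    simpa using this
  have hle : |c| ≤ 0 := by
    refine ge_of_tendsto hlim ?_
    filter_upwards [Filter.eventually_ge_atTop T] with t ht using h t ht
  exact abs_eq_zero.mp (le_antisymm hle (abs_nonneg c))

private lemma gamma_ne_zero_of (β : ℝ) (h0 : 0 < β) (h2 : β < 2) (h1 : β ≠ 1) :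
    Real.Gamma (-β) ≠ 0 := by
  apply Real.Gamma_ne_zero
  intro m
  match m with
  | 0 => intro h; push_cast at h; linarith
  | 1 => intro h; push_cast at h; exact h1 (by linarith)
  | (m+2) =>
    intro h
    push_cast at h
    have : (0:ℝ) ≤ (m:ℝ) := Nat.cast_nonneg m
    linarith

private lemma key_step (α₁ α₂ a₁ a₂ : ℝ) (f : ℝ → ℝ)
    (hα₁ : α₁ ∈ Set.Ioo (0:ℝ) 2) (hα₂ : α₂ ∈ Set.Ioo (0:ℝ) 2)
    (ha₁ : a₁ ≠ 0) (ha₂ : a₂ ≠ 0) (C T₀ : ℝ) (hC : 0 < C) (hT₀ : 0 < T₀)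
    (h1 : ∀ t : ℝ, T₀ ≤ t →
      |f t - a₁ / Real.Gamma (-α₁) * t ^ (-1 - α₁)| ≤ C * t ^ (-1 - 2 * α₁))
    (h2 : ∀ t : ℝ, T₀ ≤ t →
      |f t - a₂ / Real.Gamma (-α₂) * t ^ (-1 - α₂)| ≤ C * t ^ (-1 - 2 * α₂)) :
    ¬ (α₁ < α₂) := by
  intro hlt
  set c₁ := a₁ / Real.Gamma (-α₁) with hc₁
  set c₂ := a₂ / Real.Gamma (-α₂) with hc₂
  have hcomb : ∀ t : ℝ, T₀ ≤ t →
      |c₁ * t ^ (-1 - α₁) - c₂ * t ^ (-1 - α₂)| ≤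
        C * t ^ (-1 - 2 * α₁) + C * t ^ (-1 - 2 * α₂) := by
    intro t ht
    have e : c₁ * t ^ (-1 - α₁) - c₂ * t ^ (-1 - α₂) =
        (f t - c₂ * t ^ (-1 - α₂)) - (f t - c₁ * t ^ (-1 - α₁)) := by ring
    rw [e]
    calc |(f t - c₂ * t ^ (-1 - α₂)) - (f t - c₁ * t ^ (-1 - α₁))|
        ≤ |f t - c₂ * t ^ (-1 - α₂)| + |f t - c₁ * t ^ (-1 - α₁)| := abs_sub _ _
      _ ≤ C * t ^ (-1 - 2 * α₂) + C * t ^ (-1 - 2 * α₁) := add_le_add (h2 t ht) (h1 t ht)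
      _ = _ := by ring
  by_cases hone : α₁ = 1
  · -- c₁ = 0 since Γ(-1) = 0; c₂ ≠ 0; derive contradiction
    have hα₂1 : α₂ ≠ 1 := by intro h; rw [hone, h] at hlt; exact lt_irrefl _ hlt
    have hG2 : Real.Gamma (-α₂) ≠ 0 := gamma_ne_zero_of α₂ hα₂.1 hα₂.2 hα₂1
    have hc₂0 : c₂ ≠ 0 := div_ne_zero ha₂ hG2
    have hG1 : Real.Gamma (-α₁) = 0 := by
      rw [hone]
      simpa using Real.Gamma_neg_nat_eq_zero 1
    have hc₁0 : c₁ = 0 := by rw [hc₁, hG1, div_zero]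
    apply hc₂0
    apply aux_vanish c₂ C C 0 (α₂ - 2) (-α₂) (-1) T₀ (by linarith [hα₂.2]) (by linarith [hα₂.1])
      (by norm_num)
    intro t ht
    have ht0 : (0:ℝ) < t := lt_of_lt_of_le hT₀ ht
    have hb := hcomb t ht
    rw [hc₁0] at hb
    have hb' : |c₂| * t ^ (-1 - α₂) ≤ C * t ^ (-1 - 2 * α₁) + C * t ^ (-1 - 2 * α₂) := by
      have : |c₂ * t ^ (-1 - α₂)| = |c₂| * t ^ (-1 - α₂) := by
        rw [abs_mul, abs_of_pos (Real.rpow_pos_of_pos ht0 _)]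
      rw [← this]
      calc |c₂ * t ^ (-1 - α₂)| = |0 * t ^ (-1 - α₁) - c₂ * t ^ (-1 - α₂)| := by
            rw [zero_mul, zero_sub, abs_neg]
        _ ≤ _ := hb
    have hpow : (0:ℝ) < t ^ (1 + α₂) := Real.rpow_pos_of_pos ht0 _
    have hmul := mul_le_mul_of_nonneg_right hb' hpow.le
    have e0 : t ^ (-1 - α₂) * t ^ (1 + α₂) = 1 := by
      rw [← Real.rpow_add ht0]
      norm_num
    have e1 : t ^ (-1 - 2 * α₁) * t ^ (1 + α₂) = t ^ (α₂ - 2) := by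
      rw [← Real.rpow_add ht0, hone]; ring_nf
    have e2 : t ^ (-1 - 2 * α₂) * t ^ (1 + α₂) = t ^ (-α₂) := by
      rw [← Real.rpow_add ht0]; ring_nf
    calc |c₂| = |c₂| * (t ^ (-1 - α₂) * t ^ (1 + α₂)) := by rw [e0, mul_one]
      _ ≤ (C * t ^ (-1 - 2 * α₁) + C * t ^ (-1 - 2 * α₂)) * t ^ (1 + α₂) := by
          rw [← mul_assoc]; exact hmul
      _ = C * (t ^ (-1 - 2 * α₁) * t ^ (1 + α₂)) + C * (t ^ (-1 - 2 * α₂) * t ^ (1 + α₂)) := by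
          ring
      _ = C * t ^ (α₂ - 2) + C * t ^ (-α₂) + 0 * t ^ (-1 : ℝ) := by rw [e1, e2]; ring
  · -- α₁ ≠ 1 : c₁ ≠ 0, derive contradiction
    have hG1 : Real.Gamma (-α₁) ≠ 0 := gamma_ne_zero_of α₁ hα₁.1 hα₁.2 hone
    have hc₁0 : c₁ ≠ 0 := div_ne_zero ha₁ hG1
    apply hc₁0
    apply aux_vanish c₁ |c₂| C C (α₁ - α₂) (-α₁) (α₁ - 2 * α₂) T₀ (by linarith)
      (by linarith [hα₁.1]) (by linarith [hα₁.1])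
    intro t ht
    have ht0 : (0:ℝ) < t := lt_of_lt_of_le hT₀ ht
    have hb := hcomb t ht
    have habs1 : |c₁ * t ^ (-1 - α₁)| = |c₁| * t ^ (-1 - α₁) := by
      rw [abs_mul, abs_of_pos (Real.rpow_pos_of_pos ht0 _)]
    have habs2 : |c₂ * t ^ (-1 - α₂)| = |c₂| * t ^ (-1 - α₂) := by
      rw [abs_mul, abs_of_pos (Real.rpow_pos_of_pos ht0 _)]
    have hb' : |c₁| * t ^ (-1 - α₁) ≤ |c₂| * t ^ (-1 - α₂)
        + (C * t ^ (-1 - 2 * α₁) + C * t ^ (-1 - 2 * α₂)) := by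
      have h3 := abs_sub_abs_le_abs_sub (c₁ * t ^ (-1 - α₁)) (c₂ * t ^ (-1 - α₂))
      rw [habs1, habs2] at h3
      linarith [hb, h3]
    have hpow : (0:ℝ) < t ^ (1 + α₁) := Real.rpow_pos_of_pos ht0 _
    have hmul := mul_le_mul_of_nonneg_right hb' hpow.le
    have e0 : t ^ (-1 - α₁) * t ^ (1 + α₁) = 1 := by
      rw [← Real.rpow_add ht0]; norm_num
    have e1 : t ^ (-1 - α₂) * t ^ (1 + α₁) = t ^ (α₁ - α₂) := by
      rw [← Real.rpow_add ht0]; ring_nf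
    have e2 : t ^ (-1 - 2 * α₁) * t ^ (1 + α₁) = t ^ (-α₁) := by
      rw [← Real.rpow_add ht0]; ring_nf
    have e3 : t ^ (-1 - 2 * α₂) * t ^ (1 + α₁) = t ^ (α₁ - 2 * α₂) := by
      rw [← Real.rpow_add ht0]; ring_nf
    calc |c₁| = |c₁| * (t ^ (-1 - α₁) * t ^ (1 + α₁)) := by rw [e0, mul_one]
      _ ≤ (|c₂| * t ^ (-1 - α₂) + (C * t ^ (-1 - 2 * α₁) + C * t ^ (-1 - 2 * α₂)))
            * t ^ (1 + α₁) := by rw [← mul_assoc]; exact hmul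
      _ = |c₂| * (t ^ (-1 - α₂) * t ^ (1 + α₁)) + C * (t ^ (-1 - 2 * α₁) * t ^ (1 + α₁))
            + C * (t ^ (-1 - 2 * α₂) * t ^ (1 + α₁)) := by ring
      _ = |c₂| * t ^ (α₁ - α₂) + C * t ^ (-α₁) + C * t ^ (α₁ - 2 * α₂) := by
          rw [e1, e2, e3]

/-- Asymptotic matching step (t1e): if a function `f` admits the two one-term power
asymptotics `f(t) = (aₖ/Γ(−αₖ)) t^{−1−αₖ} + O(t^{−1−2αₖ})` for `k = 1, 2`, with
`a₁, a₂ ≠ 0` and `α₁, α₂ ∈ (0,2)`, then `α₁ = α₂`. (Mathlib's `Real.Gamma` vanishes at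
nonpositive integers, encoding the convention `1/Γ(−1) = 0`.) -/
theorem order_uniqueness_source_data (α₁ α₂ a₁ a₂ : ℝ) (f : ℝ → ℝ)
    (hα₁ : α₁ ∈ Set.Ioo (0:ℝ) 2) (hα₂ : α₂ ∈ Set.Ioo (0:ℝ) 2)
    (ha₁ : a₁ ≠ 0) (ha₂ : a₂ ≠ 0) (C T₀ : ℝ) (hC : 0 < C) (hT₀ : 0 < T₀)
    (h1 : ∀ t : ℝ, T₀ ≤ t →
      |f t - a₁ / Real.Gamma (-α₁) * t ^ (-1 - α₁)| ≤ C * t ^ (-1 - 2 * α₁))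
    (h2 : ∀ t : ℝ, T₀ ≤ t →
      |f t - a₂ / Real.Gamma (-α₂) * t ^ (-1 - α₂)| ≤ C * t ^ (-1 - 2 * α₂)) :
    α₁ = α₂ := by
  have k1 := key_step α₁ α₂ a₁ a₂ f hα₁ hα₂ ha₁ ha₂ C T₀ hC hT₀ h1 h2
  have k2 := key_step α₂ α₁ a₂ a₁ f hα₂ hα₁ ha₂ ha₁ C T₀ hC hT₀ h2 h1
  linarith [not_lt.mp k1, not_lt.mp k2]
end

section
/- Let τ > 0, σ > 0, a ∈ ℝ, and u_a, u_b ∈ ℝ, and let u : ℝ → ℝ be the affine function u(s) = u_a + ((u_b − u_a)/τ)(s − a) (so u(a) = u_a and u(a+τ) = u_b). Then ∫_a^{a+τ} e^{−σ(a + 2τ − s)} u(s) ds = w¹ u_b + w² u_a, where w¹ = e^{−στ}(e^{−στ} − 1 + στ)/(σ²τ) and w² = e^{−στ}(1 − e^{−στ} − στ e^{−στ})/(σ²τ). -/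
open Real

section ExpAffine

variable {σ : ℝ} (t a α β : ℝ)

theorem hasDerivAt_exp_kernel_mul_affine_antideriv (hσ : σ ≠ 0) (s : ℝ) :
    HasDerivAt (fun s => exp (-σ * (t - s)) * ((α + β * (s - a)) / σ - β / σ ^ 2))
      (exp (-σ * (t - s)) * (α + β * (s - a))) s := by
  have hkernel : HasDerivAt (fun s => exp (-σ * (t - s))) (exp (-σ * (t - s)) * σ) s := by
    simpa using (((hasDerivAt_id s).const_sub t).const_mul (-σ)).exp
  have hpoly : HasDerivAt (fun s => (α + β * (s - a)) / σ - β / σ ^ 2) (β / σ) s := by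
    simpa using (((((hasDerivAt_id s).sub_const a).const_mul β).const_add α).div_const σ).sub_const
      (β / σ ^ 2)
  refine (hkernel.mul hpoly).congr_deriv ?_
  field_simp
  ring

theorem integral_exp_kernel_mul_affine (hσ : σ ≠ 0) (x y : ℝ) :
    ∫ s in x..y, exp (-σ * (t - s)) * (α + β * (s - a)) =
      exp (-σ * (t - y)) * ((α + β * (y - a)) / σ - β / σ ^ 2) -
        exp (-σ * (t - x)) * ((α + β * (x - a)) / σ - β / σ ^ 2) :=
  intervalIntegral.integral_eq_sub_of_hasDerivAt
    (fun s _ => hasDerivAt_exp_kernel_mul_affine_antideriv t a α β hσ s)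
    ((by fun_prop : Continuous fun s => exp (-σ * (t - s)) * (α + β * (s - a))).intervalIntegrable
      x y)

end ExpAffine

/-- Exact convolution weights for the fast sum-of-exponentials time-stepping scheme:
integrating `e^{−σ(a+2τ−s)}` against the affine interpolant of `u` on `[a, a+τ]` gives
`w¹ u_b + w² u_a` with `w¹ = e^{−στ}(e^{−στ} − 1 + στ)/(σ²τ)` and
`w² = e^{−στ}(1 − e^{−στ} − στ e^{−στ})/(σ²τ)`. -/
theorem soe_convolution_weights (τ σ a ua ub : ℝ) (hτ : 0 < τ) (hσ : 0 < σ) :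
    ∫ s in a..(a + τ), Real.exp (-σ * (a + 2 * τ - s)) * (ua + (ub - ua) / τ * (s - a)) =
      Real.exp (-σ * τ) * (Real.exp (-σ * τ) - 1 + σ * τ) / (σ ^ 2 * τ) * ub +
      Real.exp (-σ * τ) * (1 - Real.exp (-σ * τ) - σ * τ * Real.exp (-σ * τ)) / (σ ^ 2 * τ) * ua := by
  rw [integral_exp_kernel_mul_affine _ _ _ _ hσ.ne']
  have hright : -σ * (a + 2 * τ - (a + τ)) = -σ * τ := by ring
  have hleft : -σ * (a + 2 * τ - a) = -σ * τ + -σ * τ := by ring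
  rw [hright, hleft, exp_add]
  field_simp [hτ.ne']
  ring
end
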